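/- Let d > 0, c > 0 and 0 < α < 1 be real numbers, and let u : [0, d) → ℝ be a nonnegative, non-decreasing continuous function satisfying the functional inequality u(s) ≤ (c/(r − s))·(u(r))^{1−α} for all 0 ≤ s < r < d. Then u(0) ≤ (2^{α+1} c / ((2^α − 1) d))^{1/α}. -/

import Mathlib

/-!
For `T < d` consider the weighted function `g s = (T - s) ^ (1 / α) * u s` on `[0, T)`, which is
bounded by `T ^ (1 / α) * u T`. Applying the inequality with `r = T - l (T - s)` gives
`g s ≤ K * g r ^ (1 - α)`: the weight exponent `1 / α` is exactly the one for which the powers of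
`T - s` cancel. Hence `M = sup g` satisfies `M ≤ K * M ^ (1 - α)`, i.e. `M ^ α ≤ K`, and so
`T * u 0 ^ α ≤ K`. The choice `l = 2 ^ (-α)` gives `K = 2 c / (2 ^ α - 1)`; finally let `T → d`.
-/

open Real Set Filter Topology

lemma rpow_le_of_le_mul_rpow_one_sub {M K α : ℝ} (hM : 0 ≤ M) (hK : 0 ≤ K) (hα : 0 < α)
    (h : M ≤ K * M ^ (1 - α)) : M ^ α ≤ K := by
  rcases hM.eq_or_lt with rfl | hM
  · rwa [zero_rpow hα.ne']
  have hpos : 0 < M ^ (1 - α) := rpow_pos_of_pos hM _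
  rwa [← mul_le_mul_iff_left₀ hpos, ← rpow_add hM, add_sub_cancel, rpow_one]

lemma rpow_le_of_forall_exists_le_mul_rpow_one_sub {ι : Type*} {S : Set ι} {g : ι → ℝ}
    {K α : ℝ} (hK : 0 ≤ K) (hα0 : 0 < α) (hα1 : α ≤ 1) (hbdd : BddAbove (g '' S))
    (hg : ∀ s ∈ S, 0 ≤ g s) (hstep : ∀ s ∈ S, ∃ r ∈ S, g s ≤ K * g r ^ (1 - α)) :
    ∀ s ∈ S, g s ^ α ≤ K := by
  intro s hs
  have hle_sup : ∀ r ∈ S, g r ≤ sSup (g '' S) := fun r hr => le_csSup hbdd (mem_image_of_mem g hr)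
  have hsup_nonneg : 0 ≤ sSup (g '' S) := (hg s hs).trans (hle_sup s hs)
  have hsup : sSup (g '' S) ≤ K * sSup (g '' S) ^ (1 - α) := by
    refine csSup_le ⟨g s, mem_image_of_mem g hs⟩ ?_
    rintro _ ⟨t, ht, rfl⟩
    obtain ⟨r, hr, hgt⟩ := hstep t ht
    exact hgt.trans (mul_le_mul_of_nonneg_left
      (rpow_le_rpow (hg r hr) (hle_sup r hr) (by linarith)) hK)
  exact (rpow_le_rpow (hg s hs) (hle_sup s hs) hα0.le).trans
    (rpow_le_of_le_mul_rpow_one_sub hsup_nonneg hK hα0 hsup)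

lemma rpow_inv_mul_le_of_le_div_mul_rpow {c α l ρ x y : ℝ} (hα : 0 < α) (hl0 : 0 < l)
    (hρ : 0 < ρ) (hy : 0 ≤ y) (h : x ≤ c / ((1 - l) * ρ) * y ^ (1 - α)) :
    ρ ^ α⁻¹ * x ≤ c / ((1 - l) * l ^ (α⁻¹ - 1)) * ((l * ρ) ^ α⁻¹ * y) ^ (1 - α) := by
  have hexp : α⁻¹ * (1 - α) = α⁻¹ - 1 := by field_simp
  have hρpow : ρ ^ α⁻¹ = ρ * ρ ^ (α⁻¹ - 1) := by
    rw [← rpow_one_add' hρ.le (by simp [hα.ne']), add_sub_cancel]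
  calc ρ ^ α⁻¹ * x ≤ ρ ^ α⁻¹ * (c / ((1 - l) * ρ) * y ^ (1 - α)) :=
        mul_le_mul_of_nonneg_left h (by positivity)
    _ = c / ((1 - l) * l ^ (α⁻¹ - 1)) * ((l * ρ) ^ α⁻¹ * y) ^ (1 - α) := by
      rw [mul_rpow (by positivity) hy, ← rpow_mul (by positivity), hexp,
        mul_rpow hl0.le hρ.le, hρpow]
      have : l ^ (α⁻¹ - 1) ≠ 0 := (rpow_pos_of_pos hl0 _).ne'
      field_simp

lemma meyers_mul_rpow_le {u : ℝ → ℝ} {c α l T : ℝ} (hc : 0 < c) (hα0 : 0 < α)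
    (hα1 : α ≤ 1) (hl0 : 0 < l) (hl1 : l < 1) (hT : 0 < T)
    (h_nonneg : ∀ s ∈ Icc 0 T, 0 ≤ u s)
    (h_mono : ∀ s ∈ Icc 0 T, u s ≤ u T)
    (h_ineq : ∀ s r, 0 ≤ s → s < r → r < T → u s ≤ c / (r - s) * u r ^ (1 - α)) :
    T * u 0 ^ α ≤ c / ((1 - l) * l ^ (α⁻¹ - 1)) := by
  set g : ℝ → ℝ := fun s => (T - s) ^ α⁻¹ * u s
  have hg : ∀ s ∈ Ico 0 T, 0 ≤ g s := fun s hs =>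
    mul_nonneg (rpow_nonneg (by linarith [hs.2]) _) (h_nonneg s (Ico_subset_Icc_self hs))
  have hbdd : BddAbove (g '' Ico 0 T) := by
    refine ⟨T ^ α⁻¹ * u T, ?_⟩
    rintro _ ⟨s, hs, rfl⟩
    exact mul_le_mul (rpow_le_rpow (by linarith [hs.2]) (by linarith [hs.1]) (by positivity))
      (h_mono s (Ico_subset_Icc_self hs)) (h_nonneg s (Ico_subset_Icc_self hs)) (by positivity)
  have hstep : ∀ s ∈ Ico 0 T, ∃ r ∈ Ico 0 T,
      g s ≤ c / ((1 - l) * l ^ (α⁻¹ - 1)) * g r ^ (1 - α) := by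
    intro s ⟨hs0, hsT⟩
    have hgap : 0 < l * (T - s) := mul_pos hl0 (by linarith)
    refine ⟨T - l * (T - s), ⟨by nlinarith, by linarith⟩, ?_⟩
    have h := h_ineq s (T - l * (T - s)) hs0 (by nlinarith) (by linarith)
    have hr : T - (T - l * (T - s)) = l * (T - s) := by ring
    rw [show T - l * (T - s) - s = (1 - l) * (T - s) by ring] at h
    simp only [g, hr]
    exact rpow_inv_mul_le_of_le_div_mul_rpow hα0 hl0 (by linarith)
      (h_nonneg _ ⟨by nlinarith, by linarith⟩) h
  have hK : 0 ≤ c / ((1 - l) * l ^ (α⁻¹ - 1)) :=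
    div_nonneg hc.le (mul_nonneg (by linarith) (rpow_nonneg hl0.le _))
  have h0 := rpow_le_of_forall_exists_le_mul_rpow_one_sub hK hα0 hα1 hbdd hg hstep 0 ⟨le_rfl, hT⟩
  simp only [g, sub_zero] at h0
  rwa [mul_rpow (by positivity) (h_nonneg 0 ⟨le_rfl, hT.le⟩), rpow_inv_rpow hT.le hα0.ne'] at h0

lemma one_sub_two_rpow_neg_mul_rpow {α : ℝ} (hα : 0 < α) :
    (1 - (2 : ℝ) ^ (-α)) * ((2 : ℝ) ^ (-α)) ^ (α⁻¹ - 1) = (2 ^ α - 1) / 2 := by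
  rw [← rpow_mul zero_le_two, show -α * (α⁻¹ - 1) = α + -1 by field_simp; ring,
    rpow_add two_pos, rpow_neg zero_le_two, rpow_neg_one]
  have : (2:ℝ) ^ α ≠ 0 := (rpow_pos_of_pos two_pos α).ne'
  field_simp

theorem meyers_lemma_general (d c α : ℝ) (hd : 0 < d) (hc : 0 < c) (hα0 : 0 < α) (hα1 : α < 1)
    (u : ℝ → ℝ)
    (h_nonneg : ∀ s ∈ Set.Ico (0 : ℝ) d, 0 ≤ u s)
    (h_mono : ∀ s ∈ Set.Ico (0 : ℝ) d, ∀ r ∈ Set.Ico (0 : ℝ) d, s ≤ r → u s ≤ u r)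
    (h_ineq : ∀ s r : ℝ, 0 ≤ s → s < r → r < d → u s ≤ c / (r - s) * u r ^ (1 - α)) :
    u 0 ≤ (2 ^ (α + 1) * c / ((2 ^ α - 1) * d)) ^ (1 / α) := by
  have hu0 : 0 ≤ u 0 := h_nonneg 0 ⟨le_rfl, hd⟩
  have h2α : 0 < (2 : ℝ) ^ α - 1 := by linarith [one_lt_rpow one_lt_two hα0]
  have hK : 0 ≤ 2 * c / (2 ^ α - 1) := by positivity
  have hT : ∀ T < d, T * u 0 ^ α ≤ 2 * c / (2 ^ α - 1) := by
    intro T hTd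
    rcases le_or_gt T 0 with hT0 | hT0
    · exact (mul_nonpos_of_nonpos_of_nonneg hT0 (rpow_nonneg hu0 _)).trans hK
    have hIcc : ∀ s ∈ Icc 0 T, s ∈ Ico 0 d := fun s hs => ⟨hs.1, hs.2.trans_lt hTd⟩
    have h := meyers_mul_rpow_le hc hα0 hα1.le (rpow_pos_of_pos two_pos (-α))
      (rpow_lt_one_of_one_lt_of_neg one_lt_two (neg_lt_zero.2 hα0)) hT0
      (fun s hs => h_nonneg s (hIcc s hs))
      (fun s hs => h_mono s (hIcc s hs) T (hIcc T ⟨hT0.le, le_rfl⟩) hs.2)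
      (fun s r hs hsr hrT => h_ineq s r hs hsr (hrT.trans hTd))
    rwa [one_sub_two_rpow_neg_mul_rpow hα0, div_div_eq_mul_div, mul_comm c] at h
  have hd' : d * u 0 ^ α ≤ 2 * c / (2 ^ α - 1) :=
    le_of_tendsto ((continuous_mul_const _).tendsto d |>.mono_left nhdsWithin_le_nhds)
      (eventually_nhdsWithin_of_forall (s := Iio d) hT)
  have h2 : (2 : ℝ) ≤ 2 ^ (α + 1) := by
    simpa using rpow_le_rpow_of_exponent_le one_le_two (by linarith : (1 : ℝ) ≤ α + 1)
  calc u 0 ≤ (2 * c / ((2 ^ α - 1) * d)) ^ α⁻¹ := by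
        rw [le_rpow_inv_iff_of_pos hu0 (by positivity) hα0, ← div_div, le_div_iff₀ hd]
        linarith
    _ ≤ (2 ^ (α + 1) * c / ((2 ^ α - 1) * d)) ^ (1 / α) := by
        rw [one_div]
        gcongr

/-- **Meyers' lemma**: if `u : [0, d) → ℝ` is a nonnegative, non-decreasing continuous function
satisfying `u(s) ≤ (c/(r − s)) · u(r)^{1−α}` for all `0 ≤ s < r < d` (with constants `c > 0`,
`0 < α < 1`), then `u(0) ≤ (2^{α+1} c / ((2^α − 1) d))^{1/α}`. -/
theorem meyers_lemma (d c α : ℝ) (hd : 0 < d) (hc : 0 < c) (hα0 : 0 < α) (hα1 : α < 1)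
    (u : ℝ → ℝ)
    (h_cont : ContinuousOn u (Set.Ico 0 d))
    (h_nonneg : ∀ s ∈ Set.Ico (0 : ℝ) d, 0 ≤ u s)
    (h_mono : ∀ s ∈ Set.Ico (0 : ℝ) d, ∀ r ∈ Set.Ico (0 : ℝ) d, s ≤ r → u s ≤ u r)
    (h_ineq : ∀ s r : ℝ, 0 ≤ s → s < r → r < d → u s ≤ c / (r - s) * u r ^ (1 - α)) :
    u 0 ≤ (2 ^ (α + 1) * c / ((2 ^ α - 1) * d)) ^ (1 / α) :=
  meyers_lemma_general d c α hd hc hα0 hα1 u h_nonneg h_mono h_ineq
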